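/- For any real α, β, nonnegative integer k, and smooth φ on ℝ^n ∖ {0}: A_α A_β (φ log^k r) = (A_α A_β φ) log^k r + k(A_α B_β φ + B_α A_β φ) log^{k-1} r + k(k-1)(A_α φ + A_β φ + B_α B_β φ) log^{k-2} r + k(k-1)(k-2)(B_α φ + B_β φ) log^{k-3} r + k(k-1)(k-2)(k-3) φ log^{k-4} r. -/

import Mathlib

open Real Topology

noncomputable section

/-- The Euclidean Laplacian `Δf = ∑ ∂²f/∂xᵢ²` on `ℝ^n`. -/
def lap (n : ℕ) (f : EuclideanSpace ℝ (Fin n) → ℝ) (x : EuclideanSpace ℝ (Fin n)) : ℝ :=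
  ∑ i : Fin n, iteratedFDeriv ℝ 2 f x ![EuclideanSpace.single i 1, EuclideanSpace.single i 1]

/-- The radial derivative `r∂_r f = ∑ xᵢ ∂f/∂xᵢ`. -/
def rdr (n : ℕ) (f : EuclideanSpace ℝ (Fin n) → ℝ) (x : EuclideanSpace ℝ (Fin n)) : ℝ :=
  ∑ i : Fin n, x i * fderiv ℝ f x (EuclideanSpace.single i 1)

/-- The operator `A_α = r²Δ + 2α r∂_r + α(α+n-2)`. -/
def Aop (n : ℕ) (α : ℝ) (f : EuclideanSpace ℝ (Fin n) → ℝ) (x : EuclideanSpace ℝ (Fin n)) : ℝ :=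
  ‖x‖ ^ (2 : ℕ) * lap n f x + 2 * α * rdr n f x + α * (α + (n : ℝ) - 2) * f x

/-- The operator `B_α = 2 r∂_r + (2α+n-2)`. -/
def Bop (n : ℕ) (α : ℝ) (f : EuclideanSpace ℝ (Fin n) → ℝ) (x : EuclideanSpace ℝ (Fin n)) : ℝ :=
  2 * rdr n f x + (2 * α + (n : ℝ) - 2) * f x

namespace Stmt10Aux

variable {n k : ℕ} {f g : EuclideanSpace ℝ (Fin n) → ℝ} {x : EuclideanSpace ℝ (Fin n)}

abbrev Lg {n : ℕ} (y : EuclideanSpace ℝ (Fin n)) : ℝ := Real.log ‖y‖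
abbrev ee {n : ℕ} (i : Fin n) : EuclideanSpace ℝ (Fin n) := EuclideanSpace.single i (1:ℝ)

lemma lap_eq (f : EuclideanSpace ℝ (Fin n) → ℝ) (x : EuclideanSpace ℝ (Fin n)) :
    lap n f x = ∑ i : Fin n, fderiv ℝ (fderiv ℝ f) x (ee i) (ee i) := by
  unfold lap
  congr 1
  funext i
  rw [iteratedFDeriv_two_apply]
  simp

lemma inner_single (x : EuclideanSpace ℝ (Fin n)) (i : Fin n) :
    (innerSL ℝ x) (ee i) = x i := by
  simp [EuclideanSpace.inner_single_right]

lemma sum_sq_eq (x : EuclideanSpace ℝ (Fin n)) :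
    ∑ i : Fin n, x i * x i = ‖x‖ ^ 2 := by
  have : (inner ℝ x x : ℝ) = ‖x‖ ^ 2 := real_inner_self_eq_norm_sq x
  rw [← this, PiLp.inner_apply]
  simp [PiLp.inner_apply, RCLike.inner_apply, sq]

lemma hasFDerivAt_normsq (x : EuclideanSpace ℝ (Fin n)) :
    HasFDerivAt (fun y : EuclideanSpace ℝ (Fin n) => ‖y‖ ^ 2) ((2:ℝ) • innerSL ℝ x) x := by
  have h := HasFDerivAt.norm_sq (hasFDerivAt_id x)
  refine h.congr_fderiv ?_
  ext v; simp

lemma hasFDerivAt_Lg (hx : x ≠ 0) :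
    HasFDerivAt (Lg (n := n)) ((‖x‖ ^ 2)⁻¹ • innerSL ℝ x) x := by
  have hne : ‖x‖ ^ 2 ≠ 0 := pow_ne_zero _ (norm_ne_zero_iff.2 hx)
  have h := ((hasFDerivAt_normsq x).log hne).const_mul (2⁻¹ : ℝ)
  have hfun : (fun y : EuclideanSpace ℝ (Fin n) => 2⁻¹ * Real.log (‖y‖ ^ 2)) = Lg (n := n) := by
    funext y; rw [Real.log_pow]; push_cast; ring
  rw [hfun] at h
  refine h.congr_fderiv ?_
  ext v; simp; ring

lemma contDiffAt_Lg (hx : x ≠ 0) (m : ℕ∞) :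
    ContDiffAt ℝ m (Lg (n := n)) x :=
  (contDiffAt_norm ℝ hx).log (norm_ne_zero_iff.2 hx)

lemma _root_.HasFDerivAt.npow {X : Type*} [NormedAddCommGroup X] [NormedSpace ℝ X]
    {f : X → ℝ} {f' : X →L[ℝ] ℝ} {x : X} (h : HasFDerivAt f f' x) (k : ℕ) :
    HasFDerivAt (fun z => f z ^ k) (((k : ℝ) * f x ^ (k-1)) • f') x :=
  (hasDerivAt_pow k (f x)).comp_hasFDerivAt x h

lemma hasFDerivAt_mul_Lpow {y : EuclideanSpace ℝ (Fin n)} (hy : y ≠ 0)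
    (hf : DifferentiableAt ℝ f y) :
    HasFDerivAt (fun z => f z * Lg z ^ k)
      (f y • (((k : ℝ) * Lg y ^ (k-1)) • ((‖y‖ ^ 2)⁻¹ • innerSL ℝ y)) + (Lg y ^ k) • fderiv ℝ f y) y :=
  hf.hasFDerivAt.mul ((hasFDerivAt_Lg hy).npow k)

lemma fderiv_mul_Lpow {y : EuclideanSpace ℝ (Fin n)} (hy : y ≠ 0)
    (hf : DifferentiableAt ℝ f y) (v : EuclideanSpace ℝ (Fin n)) :
    fderiv ℝ (fun z => f z * Lg z ^ k) y v =
      Lg y ^ k * fderiv ℝ f y v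
      + f y * ((k : ℝ) * Lg y ^ (k-1)) * ((‖y‖ ^ 2)⁻¹ * (innerSL ℝ y v)) := by
  rw [(hasFDerivAt_mul_Lpow hy hf).fderiv]
  simp; ring

lemma rdr_mul_Lpow (hx : x ≠ 0) (hf : DifferentiableAt ℝ f x) :
    rdr n (fun z => f z * Lg z ^ k) x
      = Lg x ^ k * rdr n f x + (k : ℝ) * Lg x ^ (k-1) * f x := by
  have hne : ‖x‖ ^ 2 ≠ 0 := pow_ne_zero _ (norm_ne_zero_iff.2 hx)
  unfold rdr
  have h : ∀ i : Fin n, x i * fderiv ℝ (fun z => f z * Lg z ^ k) x (ee i)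
      = Lg x ^ k * (x i * fderiv ℝ f x (ee i))
        + (f x * ((k:ℝ) * Lg x ^ (k-1)) * (‖x‖^2)⁻¹) * (x i * x i) := by
    intro i
    rw [fderiv_mul_Lpow hx hf, inner_single]
    ring
  rw [Finset.sum_congr rfl fun i _ => h i, Finset.sum_add_distrib,
    ← Finset.mul_sum, ← Finset.mul_sum, sum_sq_eq]
  field_simp

lemma fderiv2_mul_Lpow (hx : x ≠ 0) (hf : ContDiffAt ℝ 2 f x) (i : Fin n) :
    fderiv ℝ (fderiv ℝ (fun z => f z * Lg z ^ k)) x (ee i) (ee i) =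
      Lg x ^ k * fderiv ℝ (fderiv ℝ f) x (ee i) (ee i)
      + (2*(k:ℝ)*Lg x^(k-1)*(‖x‖^2)⁻¹) * (x i * fderiv ℝ f x (ee i))
      + ((k:ℝ)*((k-1:ℕ):ℝ)*Lg x^(k-1-1)*(‖x‖^2)⁻¹*(‖x‖^2)⁻¹) * (x i * x i) * f x
      + ((k:ℝ)*Lg x^(k-1)*(‖x‖^2)⁻¹) * f x
      + (-2*(k:ℝ)*Lg x^(k-1)*(‖x‖^2)⁻¹*(‖x‖^2)⁻¹) * (x i * x i) * f x := by
  have hne : ‖x‖ ^ 2 ≠ 0 := pow_ne_zero _ (norm_ne_zero_iff.2 hx)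
  set F := fun z => f z * Lg z ^ k with hFdef
  have hF2 : ContDiffAt ℝ 2 F x := hf.mul ((contDiffAt_Lg hx 2).pow k)
  have hFd : DifferentiableAt ℝ (fderiv ℝ F) x :=
    (hF2.fderiv_right (m := 1) one_add_one_eq_two.le).differentiableAt one_ne_zero
  have hfd : DifferentiableAt ℝ (fderiv ℝ f) x :=
    (hf.fderiv_right (m := 1) one_add_one_eq_two.le).differentiableAt one_ne_zero
  have step1 : fderiv ℝ (fderiv ℝ F) x (ee i) (ee i)
      = fderiv ℝ (fun y => fderiv ℝ F y (ee i)) x (ee i) := by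
    rw [fderiv_clm_apply hFd (differentiableAt_const _)]
    simp
  have hev : (fun y => fderiv ℝ F y (ee i)) =ᶠ[𝓝 x]
      (fun y => Lg y ^ k * fderiv ℝ f y (ee i)
        + (f y * ((k:ℝ) * Lg y ^ (k-1))) * ((‖y‖^2)⁻¹ * y i)) := by
    have h0 : ∀ᶠ y in 𝓝 x, y ≠ 0 := isOpen_compl_singleton.eventually_mem hx
    have h1 : ∀ᶠ y in 𝓝 x, DifferentiableAt ℝ f y :=
      (hf.eventually (by simp)).mono fun y hy => hy.differentiableAt (by norm_num)
    filter_upwards [h0, h1] with y hy0 hy1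
    show fderiv ℝ (fun z => f z * Lg z ^ k) y (ee i) = _
    rw [fderiv_mul_Lpow hy0 hy1, inner_single]
  have hgI : HasFDerivAt (fun y => fderiv ℝ f y (ee i))
      ((fderiv ℝ f x).comp (0 : _ →L[ℝ] _) + (fderiv ℝ (fderiv ℝ f) x).flip (ee i)) x :=
    hfd.hasFDerivAt.clm_apply (hasFDerivAt_const _ _)
  have hproj : HasFDerivAt (fun y : EuclideanSpace ℝ (Fin n) => y i)
      (EuclideanSpace.proj i : _ →L[ℝ] ℝ) x :=
    (EuclideanSpace.proj i : EuclideanSpace ℝ (Fin n) →L[ℝ] ℝ).hasFDerivAt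
  have hinv : HasFDerivAt (fun y : EuclideanSpace ℝ (Fin n) => (‖y‖^2)⁻¹)
      ((-(((‖x‖^2)^2)⁻¹)) • ((2:ℝ) • innerSL ℝ x)) x := by
    have h := (hasDerivAt_inv hne).comp_hasFDerivAt x (hasFDerivAt_normsq x)
    exact h
  have hfx : HasFDerivAt f (fderiv ℝ f x) x :=
    (hf.differentiableAt (by norm_num)).hasFDerivAt
  have hE := (((hasFDerivAt_Lg hx).npow k).mul hgI).add
    ((hfx.mul (((hasFDerivAt_Lg hx).npow (k-1)).const_mul (k:ℝ))).mul
      (hinv.mul hproj))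
  have hE' : HasFDerivAt (fun y => Lg y ^ k * fderiv ℝ f y (ee i)
    + f y * ((k:ℝ) * Lg y ^ (k-1)) * ((‖y‖^2)⁻¹ * y i)) _ x := hE
  rw [step1, hev.fderiv_eq, hE'.fderiv]
  have hsing : (ee i : EuclideanSpace ℝ (Fin n)) i = 1 := by
    simp [EuclideanSpace.single_apply]
  have hps : (EuclideanSpace.proj i : EuclideanSpace ℝ (Fin n) →L[ℝ] ℝ) (ee i) = 1 := by
    simp [EuclideanSpace.single_apply]
  have hz : (fderiv ℝ f x) (0 : EuclideanSpace ℝ (Fin n)) = 0 := (fderiv ℝ f x).map_zero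
  simp only [ContinuousLinearMap.add_apply, ContinuousLinearMap.smul_apply,
    ContinuousLinearMap.comp_apply, ContinuousLinearMap.flip_apply,
    ContinuousLinearMap.zero_apply, ContinuousLinearMap.coe_smul', Pi.smul_apply,
    inner_single, smul_eq_mul, hsing, hps, hz, Pi.mul_apply]
  ring

lemma lap_mul_Lpow (hx : x ≠ 0) (hf : ContDiffAt ℝ 2 f x) :
    lap n (fun z => f z * Lg z ^ k) x
      = Lg x ^ k * lap n f x
        + (2*(k:ℝ)*Lg x^(k-1)*(‖x‖^2)⁻¹) * rdr n f x
        + ((k:ℝ)*((k-1:ℕ):ℝ)*Lg x^(k-1-1) + (k:ℝ)*((n:ℝ)-2)*Lg x^(k-1)) * (‖x‖^2)⁻¹ * f x := by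
  have hne : ‖x‖ ^ 2 ≠ 0 := pow_ne_zero _ (norm_ne_zero_iff.2 hx)
  rw [lap_eq]
  have h : ∀ i : Fin n, fderiv ℝ (fderiv ℝ (fun z => f z * Lg z ^ k)) x (ee i) (ee i)
      = Lg x ^ k * fderiv ℝ (fderiv ℝ f) x (ee i) (ee i)
        + (2*(k:ℝ)*Lg x^(k-1)*(‖x‖^2)⁻¹) * (x i * fderiv ℝ f x (ee i))
        + (((k:ℝ)*((k-1:ℕ):ℝ)*Lg x^(k-1-1) - 2*(k:ℝ)*Lg x^(k-1))*(‖x‖^2)⁻¹*(‖x‖^2)⁻¹*f x)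
            * (x i * x i)
        + ((k:ℝ)*Lg x^(k-1)*(‖x‖^2)⁻¹) * f x := by
    intro i
    rw [fderiv2_mul_Lpow hx hf i]
    ring
  rw [Finset.sum_congr rfl fun i _ => h i]
  rw [Finset.sum_add_distrib, Finset.sum_add_distrib, Finset.sum_add_distrib,
    ← Finset.mul_sum, ← Finset.mul_sum, ← Finset.mul_sum, sum_sq_eq,
    Finset.sum_const, Finset.card_univ, Fintype.card_fin, nsmul_eq_mul]
  rw [← lap_eq]
  have hrdr : ∑ i : Fin n, x i * fderiv ℝ f x (ee i) = rdr n f x := rfl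
  rw [hrdr]
  field_simp
  ring

lemma Aop_mul_Lpow {α : ℝ} (hx : x ≠ 0) (hf : ContDiffAt ℝ 2 f x) :
    Aop n α (fun z => f z * Lg z ^ k) x
      = Aop n α f x * Lg x ^ k + (k:ℝ) * Bop n α f x * Lg x ^ (k-1)
        + (k:ℝ) * ((k:ℝ)-1) * f x * Lg x ^ (k-2) := by
  have hne : ‖x‖ ^ 2 ≠ 0 := pow_ne_zero _ (norm_ne_zero_iff.2 hx)
  rcases k with _ | m
  · have hfun : (fun z => f z * Lg z ^ 0) = f := by funext z; simp
    rw [hfun]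
    simp
  · have hd : DifferentiableAt ℝ f x := hf.differentiableAt (by norm_num)
    unfold Aop Bop
    rw [lap_mul_Lpow hx hf, rdr_mul_Lpow hx hd]
    have e1 : m + 1 - 1 = m := rfl
    have e2 : m + 1 - 2 = m - 1 := rfl
    rw [e1, e2]
    push_cast
    field_simp
    ring

lemma rdr_congr (h : f =ᶠ[𝓝 x] g) : rdr n f x = rdr n g x := by
  unfold rdr
  rw [h.fderiv_eq]

lemma lap_congr (h : f =ᶠ[𝓝 x] g) : lap n f x = lap n g x := by
  rw [lap_eq, lap_eq, h.fderiv.fderiv_eq]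

lemma Aop_congr {α : ℝ} (h : f =ᶠ[𝓝 x] g) : Aop n α f x = Aop n α g x := by
  unfold Aop
  rw [rdr_congr h, lap_congr h, h.self_of_nhds]

lemma rdr_add (hf : DifferentiableAt ℝ f x) (hg : DifferentiableAt ℝ g x) :
    rdr n (fun y => f y + g y) x = rdr n f x + rdr n g x := by
  unfold rdr
  rw [← Finset.sum_add_distrib]
  congr 1; funext i
  rw [fderiv_fun_add hf hg]
  simp; ring

lemma lap_add (hf : ContDiffAt ℝ 2 f x) (hg : ContDiffAt ℝ 2 g x) :
    lap n (fun y => f y + g y) x = lap n f x + lap n g x := by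
  have hfd : DifferentiableAt ℝ (fderiv ℝ f) x :=
    (hf.fderiv_right (m := 1) one_add_one_eq_two.le).differentiableAt one_ne_zero
  have hgd : DifferentiableAt ℝ (fderiv ℝ g) x :=
    (hg.fderiv_right (m := 1) one_add_one_eq_two.le).differentiableAt one_ne_zero
  have hev : fderiv ℝ (fun y => f y + g y) =ᶠ[𝓝 x] fun y => fderiv ℝ f y + fderiv ℝ g y := by
    have h1 : ∀ᶠ y in 𝓝 x, DifferentiableAt ℝ f y :=
      (hf.eventually (by simp)).mono fun y hy => hy.differentiableAt (by norm_num)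
    have h2 : ∀ᶠ y in 𝓝 x, DifferentiableAt ℝ g y :=
      (hg.eventually (by simp)).mono fun y hy => hy.differentiableAt (by norm_num)
    filter_upwards [h1, h2] with y hy1 hy2
    rw [fderiv_fun_add hy1 hy2]
  rw [lap_eq, lap_eq, lap_eq, ← Finset.sum_add_distrib]
  congr 1; funext i
  rw [hev.fderiv_eq, fderiv_fun_add hfd hgd]
  simp

lemma Aop_add {α : ℝ} (hf : ContDiffAt ℝ 2 f x) (hg : ContDiffAt ℝ 2 g x) :
    Aop n α (fun y => f y + g y) x = Aop n α f x + Aop n α g x := by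
  unfold Aop
  rw [lap_add hf hg, rdr_add (hf.differentiableAt (by norm_num))
    (hg.differentiableAt (by norm_num))]
  ring

lemma rdr_const_mul (c : ℝ) (hf : DifferentiableAt ℝ f x) :
    rdr n (fun y => c * f y) x = c * rdr n f x := by
  unfold rdr
  rw [Finset.mul_sum]
  congr 1; funext i
  rw [fderiv_const_mul hf]
  simp; ring

lemma lap_const_mul (c : ℝ) (hf : ContDiffAt ℝ 2 f x) :
    lap n (fun y => c * f y) x = c * lap n f x := by
  have hfd : DifferentiableAt ℝ (fderiv ℝ f) x :=
    (hf.fderiv_right (m := 1) one_add_one_eq_two.le).differentiableAt one_ne_zero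
  have hev : fderiv ℝ (fun y => c * f y) =ᶠ[𝓝 x] fun y => c • fderiv ℝ f y := by
    have h1 : ∀ᶠ y in 𝓝 x, DifferentiableAt ℝ f y :=
      (hf.eventually (by simp)).mono fun y hy => hy.differentiableAt (by norm_num)
    filter_upwards [h1] with y hy1
    rw [fderiv_const_mul hy1]
  rw [lap_eq, lap_eq, Finset.mul_sum]
  congr 1; funext i
  rw [hev.fderiv_eq, fderiv_fun_const_smul hfd]
  simp

lemma Aop_const_mul {α : ℝ} (c : ℝ) (hf : ContDiffAt ℝ 2 f x) :
    Aop n α (fun y => c * f y) x = c * Aop n α f x := by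
  unfold Aop
  rw [lap_const_mul c hf, rdr_const_mul c (hf.differentiableAt (by norm_num))]
  ring

lemma contDiffAt_rdr (m : ℕ∞) (hf : ContDiffAt ℝ (⊤ : ℕ∞) f x) :
    ContDiffAt ℝ m (rdr n f) x := by
  have hfd : ContDiffAt ℝ m (fderiv ℝ f) x := hf.fderiv_right (by exact_mod_cast le_top)
  show ContDiffAt ℝ m (fun y => ∑ i : Fin n, y i * fderiv ℝ f y (ee i)) x
  apply ContDiffAt.sum
  intro i _
  exact ((EuclideanSpace.proj i : EuclideanSpace ℝ (Fin n) →L[ℝ] ℝ).contDiff.contDiffAt).mul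
    (hfd.clm_apply contDiffAt_const)

lemma contDiffAt_lap (m : ℕ∞) (hf : ContDiffAt ℝ (⊤ : ℕ∞) f x) :
    ContDiffAt ℝ m (lap n f) x := by
  have hff : ContDiffAt ℝ m (fderiv ℝ (fderiv ℝ f)) x :=
    (hf.fderiv_right (m := ((⊤ : ℕ∞) : WithTop ℕ∞)) (by exact_mod_cast le_top)).fderiv_right
      (by exact_mod_cast le_top)
  have hfun : lap n f = fun y => ∑ i : Fin n, fderiv ℝ (fderiv ℝ f) y (ee i) (ee i) := by
    funext y; exact lap_eq f y
  rw [hfun]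
  apply ContDiffAt.sum
  intro i _
  exact (hff.clm_apply contDiffAt_const).clm_apply contDiffAt_const

lemma contDiffAt_Aop (m : ℕ∞) (α : ℝ) (hf : ContDiffAt ℝ (⊤ : ℕ∞) f x) :
    ContDiffAt ℝ m (Aop n α f) x := by
  show ContDiffAt ℝ m
    (fun y => ‖y‖ ^ (2:ℕ) * lap n f y + 2 * α * rdr n f y + α * (α + (n:ℝ) - 2) * f y) x
  exact (((contDiff_norm_sq ℝ).contDiffAt.mul (contDiffAt_lap m hf)).add
    (contDiffAt_const.mul (contDiffAt_rdr m hf))).add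
    (contDiffAt_const.mul (hf.of_le (by simp)))

lemma contDiffAt_Bop (m : ℕ∞) (α : ℝ) (hf : ContDiffAt ℝ (⊤ : ℕ∞) f x) :
    ContDiffAt ℝ m (Bop n α f) x := by
  show ContDiffAt ℝ m (fun y => 2 * rdr n f y + (2 * α + (n:ℝ) - 2) * f y) x
  exact (contDiffAt_const.mul (contDiffAt_rdr m hf)).add
    (contDiffAt_const.mul (hf.of_le (by simp)))

end Stmt10Aux

open Stmt10Aux

/-- For any real `α, β`, nonnegative integer `k`, and smooth `φ` on
`ℝ^n ∖ {0}`: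
`A_α A_β (φ log^k r) = (A_α A_β φ) log^k r + k(A_α B_β φ + B_α A_β φ) log^{k-1} r`
`+ k(k-1)(A_α φ + A_β φ + B_α B_β φ) log^{k-2} r + k(k-1)(k-2)(B_α φ + B_β φ) log^{k-3} r`
`+ k(k-1)(k-2)(k-3) φ log^{k-4} r`, negative powers of `log r` appearing only with vanishing
coefficients. -/
theorem stmt10 (n : ℕ) (α β : ℝ) (k : ℕ) (φ : EuclideanSpace ℝ (Fin n) → ℝ)
    (hφ : ContDiffOn ℝ (⊤ : ℕ∞) φ {x | x ≠ 0}) (x : EuclideanSpace ℝ (Fin n)) (hx : x ≠ 0) :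
    Aop n α (Aop n β (fun y => φ y * Real.log ‖y‖ ^ k)) x =
      Aop n α (Aop n β φ) x * Real.log ‖x‖ ^ k +
        (k : ℝ) * (Aop n α (Bop n β φ) x + Bop n α (Aop n β φ) x) * Real.log ‖x‖ ^ (k - 1) +
        (k : ℝ) * ((k : ℝ) - 1) * (Aop n α φ x + Aop n β φ x + Bop n α (Bop n β φ) x) *
          Real.log ‖x‖ ^ (k - 2) +
        (k : ℝ) * ((k : ℝ) - 1) * ((k : ℝ) - 2) * (Bop n α φ x + Bop n β φ x) *
          Real.log ‖x‖ ^ (k - 3) +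
        (k : ℝ) * ((k : ℝ) - 1) * ((k : ℝ) - 2) * ((k : ℝ) - 3) * φ x *
          Real.log ‖x‖ ^ (k - 4) := by
  have hopen : IsOpen {y : EuclideanSpace ℝ (Fin n) | y ≠ 0} := isOpen_ne
  have hφat : ∀ y : EuclideanSpace ℝ (Fin n), y ≠ 0 → ContDiffAt ℝ (⊤ : ℕ∞) φ y := fun y hy =>
    hφ.contDiffAt (hopen.mem_nhds hy)
  have hφx : ContDiffAt ℝ (⊤ : ℕ∞) φ x := hφat x hx
  have hev : Aop n β (fun y => φ y * Real.log ‖y‖ ^ k) =ᶠ[𝓝 x]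
      (fun y => Aop n β φ y * Lg y ^ k
        + (k:ℝ) * (Bop n β φ y * Lg y ^ (k-1))
        + ((k:ℝ) * ((k:ℝ)-1)) * (φ y * Lg y ^ (k-2))) := by
    filter_upwards [hopen.eventually_mem hx] with y hy
    have h := Aop_mul_Lpow (α := β) (k := k) hy ((hφat y hy).of_le (WithTop.coe_le_coe.mpr le_top))
    show Aop n β (fun z => φ z * Lg z ^ k) y = _
    rw [h]; ring
  have hA : ContDiffAt ℝ 2 (Aop n β φ) x := contDiffAt_Aop 2 β hφx
  have hB : ContDiffAt ℝ 2 (Bop n β φ) x := contDiffAt_Bop 2 β hφx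
  have hP : ContDiffAt ℝ 2 φ x := hφx.of_le (WithTop.coe_le_coe.mpr le_top)
  have hAL : ContDiffAt ℝ 2 (fun y => Aop n β φ y * Lg y ^ k) x :=
    hA.mul ((contDiffAt_Lg hx 2).pow k)
  have hBL : ContDiffAt ℝ 2 (fun y => Bop n β φ y * Lg y ^ (k-1)) x :=
    hB.mul ((contDiffAt_Lg hx 2).pow (k-1))
  have hPL : ContDiffAt ℝ 2 (fun y => φ y * Lg y ^ (k-2)) x :=
    hP.mul ((contDiffAt_Lg hx 2).pow (k-2))
  have hBL' : ContDiffAt ℝ 2 (fun y => (k:ℝ) * (Bop n β φ y * Lg y ^ (k-1))) x :=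
    contDiffAt_const.mul hBL
  have hPL' : ContDiffAt ℝ 2 (fun y => ((k:ℝ) * ((k:ℝ)-1)) * (φ y * Lg y ^ (k-2))) x :=
    contDiffAt_const.mul hPL
  rw [Aop_congr hev, Aop_add (hAL.add hBL') hPL', Aop_add hAL hBL',
    Aop_const_mul (f := fun y => Bop n β φ y * Lg y ^ (k-1)) ((k:ℝ)) hBL,
    Aop_const_mul (f := fun y => φ y * Lg y ^ (k-2)) ((k:ℝ) * ((k:ℝ)-1)) hPL,
    Aop_mul_Lpow hx hA, Aop_mul_Lpow hx hB, Aop_mul_Lpow hx hP]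
  rcases k with _ | _ | _ | _ | m
  · push_cast; norm_num
  · push_cast; norm_num; ring
  · push_cast; norm_num; ring
  · push_cast; norm_num; ring
  · have e1 : m + 4 - 1 = m + 3 := rfl
    have e2 : m + 4 - 2 = m + 2 := rfl
    have e3 : m + 4 - 3 = m + 1 := rfl
    have e4 : m + 4 - 4 = m := rfl
    have e5 : m + 3 - 1 = m + 2 := rfl
    have e6 : m + 3 - 2 = m + 1 := rfl
    have e7 : m + 2 - 1 = m + 1 := rfl
    have e8 : m + 2 - 2 = m := rfl
    rw [e1, e2, e3, e4, e5, e6, e7, e8]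
    push_cast
    ring
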